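/- arXiv:1706.06573 — 5 statements merged into one kernel-verified Lean document; each statement's English description precedes it below -/
import Mathlib

section
/- Let L₁, L₂ be finite Galois extensions of K. If φ, ψ : L₁ → L₂ are two K-algebra homomorphisms, then the induced maps φ_*, ψ_* : A(L₁/K) → A(L₂/K) are equal, where (φ_*f)(τ) = φ(f(τ|_{φ,L₁})). -/
/-- Two `K`-algebra embeddings of a normal extension into another field differ by an
automorphism of the source: there is `σ₀` with `ψ = φ ∘ σ₀`. -/
theorem exists_conj_algHom (K L₁ L₂ : Type*) [Field K] [Field L₁] [Field L₂]
    [Algebra K L₁] [Algebra K L₂] [Normal K L₁] [Normal K L₂]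
    (φ ψ : L₁ →ₐ[K] L₂) :
    ∃ σ₀ : L₁ ≃ₐ[K] L₁, ∀ x, ψ x = φ (σ₀ x) := by
  -- the isomorphism onto the field range of φ
  have hmem : ∀ x, φ x ∈ φ.fieldRange.toSubalgebra := fun x => ⟨x, rfl⟩
  let c : L₁ →ₐ[K] φ.fieldRange := φ.codRestrict φ.fieldRange.toSubalgebra hmem
  have hc : Function.Bijective c := by
    constructor
    · intro a b hab
      exact φ.toRingHom.injective (congrArg Subtype.val hab)
    · rintro ⟨y, x, rfl⟩
      exact ⟨x, rfl⟩
  let e : L₁ ≃ₐ[K] φ.fieldRange := AlgEquiv.ofBijective c hc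
  have he : ∀ x, (e x : L₂) = φ x := fun x => rfl
  have he' : ∀ y : φ.fieldRange, φ (e.symm y) = y := by
    intro y
    rw [← he (e.symm y), e.apply_symm_apply]
  haveI : Normal K φ.fieldRange := Normal.of_algEquiv e
  let g := (ψ.comp e.symm.toAlgHom).restrictNormal' φ.fieldRange
  have hg : ∀ y : φ.fieldRange, (g y : L₂) = ψ (e.symm y) :=
    fun y => (ψ.comp e.symm.toAlgHom).restrictNormal_commutes φ.fieldRange y
  refine ⟨e.trans (g.trans e.symm), fun x => ?_⟩
  simp only [AlgEquiv.trans_apply]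
  rw [he', hg, e.symm_apply_apply]

/-- If `φ, ψ : L₁ → L₂` are two `K`-algebra homomorphisms of
finite Galois extensions of `K`, then the induced maps
`φ_*, ψ_* : A(L₁/K) → A(L₂/K)`, where `(φ_*f)(τ) = φ (f (τ|_{φ,L₁}))`,
are equal. -/
theorem pushforward_eq (K L₁ L₂ : Type*) [Field K] [Field L₁] [Field L₂]
    [Algebra K L₁] [Algebra K L₂]
    [FiniteDimensional K L₁] [IsGalois K L₁]
    [FiniteDimensional K L₂] [IsGalois K L₂]
    (φ ψ : L₁ →ₐ[K] L₂)
    (resφ resψ : (L₂ ≃ₐ[K] L₂) → (L₁ ≃ₐ[K] L₁))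
    (hresφ : ∀ (τ : L₂ ≃ₐ[K] L₂) (x : L₁), τ (φ x) = φ (resφ τ x))
    (hresψ : ∀ (τ : L₂ ≃ₐ[K] L₂) (x : L₁), τ (ψ x) = ψ (resψ τ x))
    (f : (L₁ ≃ₐ[K] L₁) → L₁)
    (hf : ∀ σ τ : L₁ ≃ₐ[K] L₁, σ (f (σ⁻¹ * τ * σ)) = f τ) :
    ∀ τ : L₂ ≃ₐ[K] L₂, φ (f (resφ τ)) = ψ (f (resψ τ)) := by
  obtain ⟨σ₀, hσ₀⟩ := exists_conj_algHom K L₁ L₂ φ ψ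
  intro τ
  have hinj : Function.Injective φ := φ.toRingHom.injective
  -- the restrictions are conjugate by σ₀
  have hconj : ∀ x, σ₀ (resψ τ x) = resφ τ (σ₀ x) := by
    intro x
    apply hinj
    rw [← hσ₀ (resψ τ x), ← hresψ τ x, hσ₀ x, hresφ τ (σ₀ x)]
  have hconj' : resψ τ = σ₀⁻¹ * resφ τ * σ₀ := by
    ext x
    have : (σ₀⁻¹ * resφ τ * σ₀) x = σ₀⁻¹ (resφ τ (σ₀ x)) := rfl
    rw [this, ← hconj x]
    exact (σ₀.symm_apply_apply (resψ τ x)).symm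
  rw [hconj', hσ₀ (f (σ₀⁻¹ * resφ τ * σ₀)), hf σ₀ (resφ τ)]
end

section
/- Let L₁, L₂ be finite Galois extensions of K and φ : L₁ → L₂ a K-algebra homomorphism. Then φ_* : A(L₁/K) → A(L₂/K) is an injective K-algebra homomorphism. -/
/-- The `K`-subalgebra `A(L/K)` of `Maps(Gal(L/K), L)`. -/
def galSubalg (K L : Type*) [Field K] [Field L] [Algebra K L] :
    Subalgebra K ((L ≃ₐ[K] L) → L) where
  carrier := {f | ∀ σ τ : L ≃ₐ[K] L, σ (f (σ⁻¹ * τ * σ)) = f τ}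
  mul_mem' := fun hf hg σ τ => by
    simp only [Pi.mul_apply, map_mul, hf σ τ, hg σ τ]
  add_mem' := fun hf hg σ τ => by
    simp only [Pi.add_apply, map_add, hf σ τ, hg σ τ]
  one_mem' := fun σ τ => by simp
  zero_mem' := fun σ τ => by simp
  algebraMap_mem' := fun r σ τ => by simp [Pi.algebraMap_apply]

/-- For a `K`-algebra homomorphism `φ : L₁ → L₂` of finite Galois
extensions of `K`, the pushforward `φ_* : A(L₁/K) → A(L₂/K)`,
`(φ_*f)(τ) = φ (f (τ|_{φ,L₁}))`, is an injective `K`-algebra homomorphism. -/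
theorem pushforward_injective_algHom (K L₁ L₂ : Type*) [Field K] [Field L₁] [Field L₂]
    [Algebra K L₁] [Algebra K L₂]
    [FiniteDimensional K L₁] [IsGalois K L₁]
    [FiniteDimensional K L₂] [IsGalois K L₂]
    (φ : L₁ →ₐ[K] L₂)
    (res : (L₂ ≃ₐ[K] L₂) → (L₁ ≃ₐ[K] L₁))
    (hres : ∀ (τ : L₂ ≃ₐ[K] L₂) (x : L₁), τ (φ x) = φ (res τ x)) :
    ∃ Φ : galSubalg K L₁ →ₐ[K] galSubalg K L₂,
      Function.Injective Φ ∧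
      ∀ (f : galSubalg K L₁) (τ : L₂ ≃ₐ[K] L₂),
        (Φ f : (L₂ ≃ₐ[K] L₂) → L₂) τ = φ ((f : (L₁ ≃ₐ[K] L₁) → L₁) (res τ)) := by
  have hφinj : Function.Injective φ := φ.injective
  have hres1 : res 1 = 1 := by
    ext x
    apply hφinj
    rw [← hres]
    rfl
  have hresmul : ∀ σ τ : L₂ ≃ₐ[K] L₂, res (σ * τ) = res σ * res τ := by
    intro σ τ
    ext x
    apply hφinj
    rw [← hres]
    show σ (τ (φ x)) = φ (res σ (res τ x))
    rw [hres, hres]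
  let resHom : (L₂ ≃ₐ[K] L₂) →* (L₁ ≃ₐ[K] L₁) := ⟨⟨res, hres1⟩, hresmul⟩
  have hresinv : ∀ σ : L₂ ≃ₐ[K] L₂, res σ⁻¹ = (res σ)⁻¹ := fun σ => map_inv resHom σ
  have hsurj : Function.Surjective res := by
    intro σ₁
    letI : Algebra L₁ L₂ := φ.toRingHom.toAlgebra
    haveI : IsScalarTower K L₁ L₂ :=
      IsScalarTower.of_algebraMap_eq (fun x => (φ.commutes x).symm)
    refine ⟨σ₁.liftNormal L₂, ?_⟩
    ext x
    apply hφinj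
    rw [← hres]
    exact AlgEquiv.liftNormal_commutes σ₁ L₂ x
  have hmem : ∀ f : galSubalg K L₁,
      (fun τ : L₂ ≃ₐ[K] L₂ => φ ((f : (L₁ ≃ₐ[K] L₁) → L₁) (res τ))) ∈ galSubalg K L₂ := by
    intro f σ τ
    show σ (φ ((f : (L₁ ≃ₐ[K] L₁) → L₁) (res (σ⁻¹ * τ * σ)))) = _
    rw [hres, hresmul, hresmul, hresinv, f.2 (res σ) (res τ)]
  refine ⟨{ toFun := fun f => ⟨fun τ => φ ((f : (L₁ ≃ₐ[K] L₁) → L₁) (res τ)), hmem f⟩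
            map_one' := ?_
            map_mul' := ?_
            map_zero' := ?_
            map_add' := ?_
            commutes' := ?_ }, ?_, ?_⟩
  · exact Subtype.ext (funext fun τ => by simp [OneMemClass.coe_one, Pi.one_apply])
  · intro f g
    exact Subtype.ext (funext fun τ => by
      simp [MulMemClass.coe_mul, Pi.mul_apply, map_mul])
  · exact Subtype.ext (funext fun τ => by simp [ZeroMemClass.coe_zero, Pi.zero_apply])
  · intro f g
    exact Subtype.ext (funext fun τ => by
      simp [AddMemClass.coe_add, Pi.add_apply, map_add])
  · intro r
    exact Subtype.ext (funext fun τ => by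
      simp [Subalgebra.coe_algebraMap, Pi.algebraMap_apply, φ.commutes])
  · intro f g h
    apply Subtype.ext
    funext σ₁
    obtain ⟨τ, rfl⟩ := hsurj σ₁
    have := congrFun (congrArg Subtype.val h) τ
    exact hφinj this
  · intro f τ
    rfl
end

section
/- Let L/K be a finite Galois extension. Each g ∈ Gal(L/K) determines an L-algebra homomorphism ev_g : A(L/K) ⊗_K L → L extending f ↦ f(g), and the map g ↦ ev_g is a bijection from Gal(L/K) to the set of L-algebra homomorphisms A(L/K) ⊗_K L → L. Equivalently, the natural map A(L/K) ⊗_K L → Maps(Gal(L/K), L) is an isomorphism of L-algebras. -/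
/-!
`A(L/K)` is the fixed space of the semilinear action `(σ • f) τ = σ (f (σ⁻¹ τ σ))` of
`Gal(L/K)` on `Gal(L/K) → L`, so the isomorphism is Galois descent for vector spaces. Both
halves come from averaging over the group. Averages `∑ σ, σ • (x • v)` are fixed, and a
functional killing them all kills `v` by Dedekind's independence of characters: so fixed
vectors span. On a fixed vector averaging is `x • v ↦ Tr(x) • v`, which turns an `L`-relation
`∑ cᵢ • vᵢ = 0` among `K`-independent fixed vectors into the `K`-relations
`∑ Tr(x cᵢ) • vᵢ = 0`; hence `Tr(x cᵢ) = 0` for all `x`, and `cᵢ = 0` by Dedekind again.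
The `L`-algebra maps `(Gal(L/K) → L) → L` are the evaluations.
-/

open scoped TensorProduct
set_option synthInstance.maxHeartbeats 400000

theorem AlgEquiv.eq_zero_of_forall_sum_mul_apply_eq_zero {K L : Type*} [Field K] [Field L]
    [Algebra K L] [FiniteDimensional K L] {c : Gal(L/K) → L} (h : ∀ x, ∑ σ, c σ * σ x = 0)
    (σ : Gal(L/K)) : c σ = 0 := by
  have hli : LinearIndependent L (fun σ : Gal(L/K) => ((σ : L →ₐ[K] L) : L →ₗ[K] L)) :=
    (linearIndependent_algHom_toLinearMap K L L).comp _ AlgEquiv.coe_toAlgHom_injective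
  exact Fintype.linearIndependent_iff.mp hli c (LinearMap.ext fun x => by simpa using h x) σ

section GaloisDescent

theorem act_sum_act_eq {G V : Type*} [Group G] [Fintype G] [AddCommMonoid V]
    (ρ : G →* AddMonoid.End V) (τ : G) (v : V) : ρ τ (∑ σ, ρ σ v) = ∑ σ, ρ σ v := by
  rw [map_sum]
  exact Fintype.sum_equiv (Equiv.mulLeft τ) _ _ fun σ => by simp

variable {K L V : Type*} [Field K] [Field L] [Algebra K L] [FiniteDimensional K L]
  [AddCommGroup V] [Module L V]

theorem span_setOf_forall_act_eq_eq_top (ρ : Gal(L/K) →* AddMonoid.End V)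
    (hρ : ∀ σ (c : L) v, ρ σ (c • v) = σ c • ρ σ v) :
    Submodule.span L {v : V | ∀ σ, ρ σ v = v} = ⊤ := by
  refine Submodule.eq_top_iff'.2 fun v => by_contra fun hv => ?_
  obtain ⟨φ, hφv, hφ⟩ := Submodule.exists_le_ker_of_notMem hv
  have key : ∀ x : L, ∑ σ, φ (ρ σ v) * σ x = 0 := fun x => by
    have : φ (∑ σ, ρ σ (x • v)) = 0 :=
      hφ (Submodule.subset_span fun τ => act_sum_act_eq ρ τ (x • v))
    simpa [hρ, mul_comm] using this
  exact hφv (by simpa using AlgEquiv.eq_zero_of_forall_sum_mul_apply_eq_zero key 1)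

theorem sum_act_smul_of_forall_act_eq [IsGalois K L] [Module K V] [IsScalarTower K L V]
    (ρ : Gal(L/K) →* AddMonoid.End V) (hρ : ∀ σ (c : L) v, ρ σ (c • v) = σ c • ρ σ v)
    {a : V} (ha : ∀ σ, ρ σ a = a) (c : L) :
    ∑ σ, ρ σ (c • a) = Algebra.trace K L c • a := by
  simp [hρ, ha, ← Finset.sum_smul, ← trace_eq_sum_automorphisms, algebraMap_smul]

theorem LinearIndependent.of_forall_act_eq [IsGalois K L] [Module K V] [IsScalarTower K L V]
    (ρ : Gal(L/K) →* AddMonoid.End V) (hρ : ∀ σ (c : L) v, ρ σ (c • v) = σ c • ρ σ v)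
    {ι : Type*} {b : ι → V} (hfix : ∀ i σ, ρ σ (b i) = b i) (hb : LinearIndependent K b) :
    LinearIndependent L b := by
  rw [linearIndependent_iff'] at hb ⊢
  intro s g hg i hi
  have htrace : ∀ x : L, Algebra.trace K L (x * g i) = 0 := fun x => by
    refine hb s (fun j => Algebra.trace K L (x * g j)) ?_ i hi
    calc ∑ j ∈ s, Algebra.trace K L (x * g j) • b j
        = ∑ σ, ρ σ (∑ j ∈ s, (x * g j) • b j) := by
          simp only [map_sum, ← sum_act_smul_of_forall_act_eq ρ hρ (hfix _)]
          exact Finset.sum_comm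
      _ = 0 := by simp [mul_smul, ← Finset.smul_sum, hg]
  have key : ∀ x : L, ∑ σ : Gal(L/K), σ (g i) * σ x = 0 := fun x => by
    have := congrArg (algebraMap K L) (htrace x)
    rw [trace_eq_sum_automorphisms, map_zero] at this
    simpa [mul_comm] using this
  simpa using AlgEquiv.eq_zero_of_forall_sum_mul_apply_eq_zero key 1

end GaloisDescent

section BaseChange

variable {K L B : Type*} [Field K] [Field L] [Algebra K L] [CommRing B] [Algebra L B]
  [Algebra K B] [IsScalarTower K L B]

variable (L) in
noncomputable def Subalgebra.baseChangeLift (A : Subalgebra K B) : L ⊗[K] A →ₐ[L] B :=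
  Algebra.TensorProduct.lift (Algebra.ofId L B) A.val fun _ _ => Commute.all _ _

@[simp]
theorem Subalgebra.baseChangeLift_tmul (A : Subalgebra K B) (l : L) (a : A) :
    A.baseChangeLift L (l ⊗ₜ a) = l • (a : B) := by
  simp [baseChangeLift, Algebra.ofId_apply, Algebra.smul_def]

theorem Subalgebra.baseChangeLift_surjective (A : Subalgebra K B)
    (hA : Submodule.span L (A : Set B) = ⊤) : Function.Surjective (A.baseChangeLift L) := by
  have hle : Submodule.span L (A : Set B) ≤ LinearMap.range (A.baseChangeLift L).toLinearMap :=
    Submodule.span_le.2 fun a ha => ⟨1 ⊗ₜ ⟨a, ha⟩, by simp⟩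
  exact LinearMap.range_eq_top.mp (top_unique (hA ▸ hle))

theorem Subalgebra.baseChangeLift_injective (A : Subalgebra K B) {ι : Type*}
    (b : Module.Basis ι K A) (hb : LinearIndependent L fun i => (b i : B)) :
    Function.Injective (A.baseChangeLift L) :=
  LinearMap.injective_of_linearIndependent (f := (A.baseChangeLift L).toLinearMap)
    (b.baseChange L).span_eq (by simpa [Function.comp_def] using hb)

end BaseChange

section Conjugation

variable (K L : Type*) [Field K] [Field L] [Algebra K L]

def galConjAct : Gal(L/K) →* AddMonoid.End (Gal(L/K) → L) where
  toFun σ :=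
    { toFun := fun f τ => σ (f (σ⁻¹ * τ * σ))
      map_zero' := by ext; simp
      map_add' := fun f g => by ext; simp }
  map_one' := by ext f τ; exact congrArg f (by group)
  map_mul' σ τ := by ext f ρ; exact congrArg (σ * τ) (congrArg f (by group))

variable {K L}

@[simp]
theorem galConjAct_apply (σ τ : Gal(L/K)) (f : Gal(L/K) → L) :
    galConjAct K L σ f τ = σ (f (σ⁻¹ * τ * σ)) :=
  rfl

theorem galConjAct_smul (σ : Gal(L/K)) (c : L) (f : Gal(L/K) → L) :
    galConjAct K L σ (c • f) = σ c • galConjAct K L σ f := by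
  ext; simp

theorem mem_galSubalg_iff {f : Gal(L/K) → L} :
    f ∈ galSubalg K L ↔ ∀ σ, galConjAct K L σ f = f :=
  forall_congr' fun _ => funext_iff.symm

theorem coe_galSubalg :
    (galSubalg K L : Set (Gal(L/K) → L)) = {f | ∀ σ, galConjAct K L σ f = f} :=
  Set.ext fun _ => mem_galSubalg_iff

end Conjugation

theorem Pi.evalAlgHom_bijective {k ι : Type*} [CommSemiring k] [NoZeroDivisors k] [Nontrivial k]
    [Finite ι] : Function.Bijective (Pi.evalAlgHom k (fun _ : ι => k)) := by
  classical
  refine ⟨fun i j hij => ?_, fun φ => (AlgHom.eq_piEvalAlgHom φ).imp fun _ => Eq.symm⟩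
  exact Eq.symm <| by simpa [Pi.single_apply] using congr($hij (Pi.single i 1))

/-- For `L/K` finite Galois, each `g ∈ Gal(L/K)` gives an
`L`-algebra homomorphism `ev_g : L ⊗_K A(L/K) → L` extending `f ↦ f g`, the map
`g ↦ ev_g` is a bijection onto the set of all `L`-algebra homomorphisms
`L ⊗_K A(L/K) → L`, and equivalently the natural map
`L ⊗_K A(L/K) → Maps(Gal(L/K), L)` is an isomorphism of `L`-algebras. -/
theorem base_change_iso (K L : Type*) [Field K] [Field L] [Algebra K L]
    [FiniteDimensional K L] [IsGalois K L] :
    (∃ ev : (L ≃ₐ[K] L) → ((L ⊗[K] (galSubalg K L)) →ₐ[L] L),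
      (∀ (g : L ≃ₐ[K] L) (f : galSubalg K L),
        ev g ((1 : L) ⊗ₜ f) = (f : (L ≃ₐ[K] L) → L) g) ∧
      Function.Bijective ev) ∧
    ∃ e : (L ⊗[K] (galSubalg K L)) ≃ₐ[L] ((L ≃ₐ[K] L) → L),
      ∀ (l : L) (f : galSubalg K L),
        e (l ⊗ₜ f) = l • (f : (L ≃ₐ[K] L) → L) := by
  let b := Module.Basis.ofVectorSpace K (galSubalg K L)
  have hb : LinearIndependent K fun i => (b i : Gal(L/K) → L) :=
    b.linearIndependent.map' (galSubalg K L).val.toLinearMap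
      (LinearMap.ker_eq_bot.mpr Subtype.val_injective)
  have hinj := (galSubalg K L).baseChangeLift_injective b <|
    hb.of_forall_act_eq (galConjAct K L) galConjAct_smul fun i => mem_galSubalg_iff.mp (b i).2
  have hsurj := (galSubalg K L).baseChangeLift_surjective <| by
    rw [coe_galSubalg]
    exact span_setOf_forall_act_eq_eq_top (galConjAct K L) galConjAct_smul
  let e := AlgEquiv.ofBijective _ ⟨hinj, hsurj⟩
  have he (x) : e x = (galSubalg K L).baseChangeLift L x := rfl
  let precomp := (e.arrowCongr (AlgEquiv.refl : L ≃ₐ[L] L)).symm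
  refine ⟨⟨precomp ∘ Pi.evalAlgHom L _, fun g f => by simp [precomp, he], ?_⟩,
    e, fun l f => by simp [he]⟩
  exact precomp.bijective.comp Pi.evalAlgHom_bijective
end

section
/- Let L/K be a finite Galois extension and G = Gal(L/K). Then dim_K A(L/K) = |G|, i.e., A(L/K) has K-dimension equal to the order of the Galois group. -/
set_option maxHeartbeats 1000000
set_option synthInstance.maxHeartbeats 400000

section Aux

open IntermediateField

variable {K L : Type*} [Field K] [Field L] [Algebra K L]

private lemma galSubalg_exists_conj (τ : L ≃ₐ[K] L) :
    ∃ c : L ≃ₐ[K] L, c * (ConjClasses.mk τ).out * c⁻¹ = τ := by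
  have h : IsConj (ConjClasses.mk τ).out τ := by
    rw [← ConjClasses.mk_eq_mk_iff_isConj]
    exact Quotient.out_eq _
  exact isConj_iff.mp h

/-- The candidate inverse: from a family of fixed-field elements indexed by conjugacy
classes, build a function on the Galois group. -/
private noncomputable def galSection
    (x : ∀ q : ConjClasses (L ≃ₐ[K] L),
      fixedField (Subgroup.centralizer {Quotient.out q})) (τ : L ≃ₐ[K] L) : L :=
  (Classical.choose (galSubalg_exists_conj τ)) (x (ConjClasses.mk τ) : L)

private lemma galSection_eq
    (x : ∀ q : ConjClasses (L ≃ₐ[K] L),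
      fixedField (Subgroup.centralizer {Quotient.out q}))
    (τ c : L ≃ₐ[K] L) (hc : c * (ConjClasses.mk τ).out * c⁻¹ = τ) :
    galSection x τ = c (x (ConjClasses.mk τ) : L) := by
  set q := ConjClasses.mk τ with hq
  set d := Classical.choose (galSubalg_exists_conj τ) with hd
  have hds : d * q.out * d⁻¹ = τ := Classical.choose_spec (galSubalg_exists_conj τ)
  have h1 : d * q.out * d⁻¹ = c * q.out * c⁻¹ := hds.trans hc.symm
  have hmem : c⁻¹ * d ∈ Subgroup.centralizer {Quotient.out q} := by
    rw [Subgroup.mem_centralizer_singleton_iff]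
    calc c⁻¹ * d * q.out = c⁻¹ * (d * q.out * d⁻¹) * d := by group
      _ = c⁻¹ * (c * q.out * c⁻¹) * d := by rw [h1]
      _ = q.out * (c⁻¹ * d) := by group
  have hfix : (c⁻¹ * d) ((x q : L)) = (x q : L) :=
    (x q).2 (⟨c⁻¹ * d, hmem⟩ : Subgroup.centralizer {Quotient.out q})
  show d ((x q : L)) = c ((x q : L))
  calc d ((x q : L)) = c ((c⁻¹ * d) ((x q : L))) := by
        rw [AlgEquiv.mul_apply]; exact (c.apply_symm_apply _).symm
    _ = c ((x q : L)) := by rw [hfix]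

private lemma galSection_mem
    (x : ∀ q : ConjClasses (L ≃ₐ[K] L),
      fixedField (Subgroup.centralizer {Quotient.out q})) :
    galSection x ∈ galSubalg K L := by
  intro σ τ
  have hq : ConjClasses.mk (σ⁻¹ * τ * σ) = ConjClasses.mk τ := by
    rw [ConjClasses.mk_eq_mk_iff_isConj, isConj_iff]
    exact ⟨σ, by group⟩
  obtain ⟨d, hd⟩ := galSubalg_exists_conj (σ⁻¹ * τ * σ)
  have h1 : galSection x (σ⁻¹ * τ * σ) = d (x (ConjClasses.mk (σ⁻¹ * τ * σ)) : L) :=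
    galSection_eq x _ d hd
  rw [hq] at h1 hd
  have h2 : (σ * d) * (ConjClasses.mk τ).out * (σ * d)⁻¹ = τ := by
    have h : σ * (d * (ConjClasses.mk τ).out * d⁻¹) * σ⁻¹ = σ * (σ⁻¹ * τ * σ) * σ⁻¹ := by
      rw [hd]
    calc (σ * d) * (ConjClasses.mk τ).out * (σ * d)⁻¹
        = σ * (d * (ConjClasses.mk τ).out * d⁻¹) * σ⁻¹ := by group
      _ = σ * (σ⁻¹ * τ * σ) * σ⁻¹ := h
      _ = τ := by group
  have h3 : galSection x τ = (σ * d) (x (ConjClasses.mk τ) : L) :=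
    galSection_eq x τ (σ * d) h2
  rw [h1, h3, AlgEquiv.mul_apply]

/-- `A(L/K)` is `K`-linearly equivalent to the product of the fixed fields of the
centralizers of conjugacy-class representatives. -/
private noncomputable def galEquiv :
    (galSubalg K L) ≃ₗ[K]
      ∀ q : ConjClasses (L ≃ₐ[K] L),
        fixedField (Subgroup.centralizer {Quotient.out q}) where
  toFun f q := ⟨f.1 (Quotient.out q), by
    intro σ
    have h := f.2 (σ : L ≃ₐ[K] L) (Quotient.out q)
    have hσ : (σ : L ≃ₐ[K] L)⁻¹ * Quotient.out q * (σ : L ≃ₐ[K] L) = Quotient.out q := by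
      have hc := Subgroup.mem_centralizer_singleton_iff.mp σ.2
      calc (σ : L ≃ₐ[K] L)⁻¹ * Quotient.out q * (σ : L ≃ₐ[K] L)
          = (σ : L ≃ₐ[K] L)⁻¹ * (Quotient.out q * (σ : L ≃ₐ[K] L)) := by group
        _ = (σ : L ≃ₐ[K] L)⁻¹ * ((σ : L ≃ₐ[K] L) * Quotient.out q) := by rw [← hc]
        _ = Quotient.out q := by group
    rw [hσ] at h
    exact h⟩
  map_add' f g := rfl
  map_smul' c f := rfl
  invFun x := ⟨galSection x, galSection_mem x⟩
  left_inv f := by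
    apply Subtype.ext
    funext τ
    obtain ⟨d, hd⟩ := galSubalg_exists_conj τ
    have h2 : d⁻¹ * τ * d = Quotient.out (ConjClasses.mk τ) := by
      calc d⁻¹ * τ * d
          = d⁻¹ * (d * Quotient.out (ConjClasses.mk τ) * d⁻¹) * d := by rw [hd]
        _ = Quotient.out (ConjClasses.mk τ) := by group
    have h3 := f.2 d τ
    rw [h2] at h3
    dsimp only
    exact (galSection_eq _ τ d hd).trans h3
  right_inv x := by
    funext q
    apply Subtype.ext
    have hout : ConjClasses.mk (Quotient.out q) = q := Quotient.out_eq q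
    have h1 : (1 : L ≃ₐ[K] L) * (ConjClasses.mk (Quotient.out q)).out *
        (1 : L ≃ₐ[K] L)⁻¹ = Quotient.out q := by rw [hout]; group
    have h2 := galSection_eq x (Quotient.out q) 1 h1
    rw [hout] at h2
    simpa using h2

end Aux

/-- For `L/K` finite Galois with group `G`, the `K`-dimension of
`A(L/K)` equals `|G|`. -/
theorem dim_galSubalg (K L : Type*) [Field K] [Field L] [Algebra K L]
    [FiniteDimensional K L] [IsGalois K L] :
    Module.finrank K (galSubalg K L) = Nat.card (L ≃ₐ[K] L) := by
  classical
  letI : Fintype (L ≃ₐ[K] L) := AlgEquiv.fintype K L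
  letI : Fintype (ConjClasses (L ≃ₐ[K] L)) := Fintype.ofFinite _
  rw [LinearEquiv.finrank_eq (galEquiv (K := K) (L := L)),
    Module.finrank_pi_fintype]
  have key : ∀ g : L ≃ₐ[K] L,
      Module.finrank K (IntermediateField.fixedField (Subgroup.centralizer {g}))
        = Nat.card (ConjClasses.mk g).carrier := by
    intro g
    have hcpos : 0 < Nat.card (Subgroup.centralizer ({g} : Set (L ≃ₐ[K] L))) :=
      Nat.card_pos
    apply Nat.eq_of_mul_eq_mul_right hcpos
    have hl : Module.finrank K (IntermediateField.fixedField (Subgroup.centralizer {g}))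
        * Nat.card (Subgroup.centralizer ({g} : Set (L ≃ₐ[K] L)))
        = Nat.card (L ≃ₐ[K] L) := by
      rw [← IntermediateField.finrank_fixedField_eq_card,
        Module.finrank_mul_finrank,
        IsGalois.card_aut_eq_finrank]
    have hstab : Nat.card (Subgroup.centralizer ({g} : Set (L ≃ₐ[K] L)))
        = Nat.card (MulAction.stabilizer (ConjAct (L ≃ₐ[K] L)) g) := by
      rw [Subgroup.centralizer_eq_comap_stabilizer]
      exact Nat.card_congr
        (ConjAct.toConjAct.toEquiv.subtypeEquiv fun x => Subgroup.mem_comap)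
    have hOS : Nat.card (MulAction.orbit (ConjAct (L ≃ₐ[K] L)) g)
        * Nat.card (MulAction.stabilizer (ConjAct (L ≃ₐ[K] L)) g)
        = Nat.card (ConjAct (L ≃ₐ[K] L)) := by
      letI : Fintype (ConjAct (L ≃ₐ[K] L)) := Fintype.ofFinite _
      letI : Fintype (MulAction.orbit (ConjAct (L ≃ₐ[K] L)) g) := Fintype.ofFinite _
      letI : Fintype (MulAction.stabilizer (ConjAct (L ≃ₐ[K] L)) g) := Fintype.ofFinite _
      simp only [Nat.card_eq_fintype_card]
      exact MulAction.card_orbit_mul_card_stabilizer_eq_card_group _ g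
    have horb : Nat.card (ConjClasses.mk g).carrier
        = Nat.card (MulAction.orbit (ConjAct (L ≃ₐ[K] L)) g) := by
      rw [ConjAct.orbit_eq_carrier_conjClasses]
    have hConjCard : Nat.card (ConjAct (L ≃ₐ[K] L)) = Nat.card (L ≃ₐ[K] L) :=
      Nat.card_congr ConjAct.ofConjAct.toEquiv
    rw [hl, horb, hstab, hOS, hConjCard]
  calc ∑ q : ConjClasses (L ≃ₐ[K] L),
      Module.finrank K (IntermediateField.fixedField (Subgroup.centralizer {Quotient.out q}))
      = ∑ q : ConjClasses (L ≃ₐ[K] L), Nat.card (ConjClasses.mk (Quotient.out q)).carrier :=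
        Finset.sum_congr rfl fun q _ => key (Quotient.out q)
    _ = ∑ q : ConjClasses (L ≃ₐ[K] L), q.carrier.toFinset.card := by
        refine Finset.sum_congr rfl fun q _ => ?_
        have hout : ConjClasses.mk (Quotient.out q) = q := Quotient.out_eq q
        rw [hout, Set.toFinset_card, Nat.card_eq_fintype_card]
    _ = Fintype.card (L ≃ₐ[K] L) := sum_conjClasses_card_eq_card _
    _ = Nat.card (L ≃ₐ[K] L) := (Nat.card_eq_fintype_card).symm
end

section
/- Let L/K be a finite Galois extension, G = Gal(L/K), and fix τ₀ ∈ G with centralizer C ⊆ G. Then evaluation at τ₀ gives a K-algebra isomorphism from A_{c} = {f ∈ A(L/K) | supp(f) ⊆ c} onto the fixed field L^{C}, where c is the conjugacy class of τ₀. -/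
/-- Fix `τ₀ ∈ G = Gal(L/K)` with centralizer `C` and conjugacy
class `c`. Evaluation at `τ₀` gives a `K`-algebra isomorphism (in particular a
`K`-linear equivalence, multiplicativity being automatic for pointwise
evaluation) from `A_c = {f ∈ A(L/K) | supp f ⊆ c}` onto the fixed field `L^C`. -/
theorem eval_iso_fixedField (K L : Type*) [Field K] [Field L] [Algebra K L]
    [FiniteDimensional K L] [IsGalois K L] (τ₀ : L ≃ₐ[K] L)
    (Ac : Submodule K ((L ≃ₐ[K] L) → L))
    (hAc : ∀ f : (L ≃ₐ[K] L) → L,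
      f ∈ Ac ↔ ((∀ σ τ : L ≃ₐ[K] L, σ (f (σ⁻¹ * τ * σ)) = f τ) ∧
        ∀ τ : L ≃ₐ[K] L, ConjClasses.mk τ ≠ ConjClasses.mk τ₀ → f τ = 0)) :
    ∃ e : Ac ≃ₗ[K] (IntermediateField.fixedField (Subgroup.centralizer {τ₀})),
      (∀ f : Ac, (e f : L) = (f : (L ≃ₐ[K] L) → L) τ₀) ∧
      (∀ f g : Ac, (e f : L) * (e g : L) =
        ((f : (L ≃ₐ[K] L) → L) * (g : (L ≃ₐ[K] L) → L)) τ₀) := by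
  classical
  set C : Subgroup (L ≃ₐ[K] L) := Subgroup.centralizer {τ₀} with hC
  set F : IntermediateField K L := IntermediateField.fixedField C with hF
  have memF : ∀ x : L, x ∈ F ↔ ∀ σ : C, (σ : L ≃ₐ[K] L) x = x := by
    intro x; exact Iff.rfl
  -- key: well-definedness
  have key : ∀ (x : L), x ∈ F → ∀ σ₁ σ₂ : L ≃ₐ[K] L,
      σ₁ * τ₀ * σ₁⁻¹ = σ₂ * τ₀ * σ₂⁻¹ → σ₁ x = σ₂ x := by
    intro x hx σ₁ σ₂ h
    have hc : σ₂⁻¹ * σ₁ ∈ C := by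
      rw [hC, Subgroup.mem_centralizer_singleton_iff]
      have : σ₂⁻¹ * (σ₁ * τ₀ * σ₁⁻¹) * σ₂ = τ₀ := by rw [h]; group
      calc σ₂⁻¹ * σ₁ * τ₀ = σ₂⁻¹ * (σ₁ * τ₀ * σ₁⁻¹) * σ₂ * (σ₂⁻¹ * σ₁) := by group
        _ = τ₀ * (σ₂⁻¹ * σ₁) := by rw [this]
    have := (memF x).1 hx ⟨σ₂⁻¹ * σ₁, hc⟩
    rw [AlgEquiv.mul_apply] at this
    calc σ₁ x = σ₂ (σ₂⁻¹ (σ₁ x)) := (σ₂.apply_symm_apply (σ₁ x)).symm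
      _ = σ₂ x := by rw [this]
  -- evaluation lands in F
  have hval : ∀ f ∈ Ac, f τ₀ ∈ F := by
    intro f hf
    rw [memF]
    rintro ⟨σ, hσ⟩
    have hcom : σ⁻¹ * τ₀ * σ = τ₀ := by
      rw [hC, Subgroup.mem_centralizer_singleton_iff] at hσ
      rw [mul_assoc, ← hσ]; group
    have := ((hAc f).1 hf).1 σ τ₀
    rwa [hcom] at this
  -- the linear map
  let φ : Ac →ₗ[K] F :=
    { toFun := fun f => ⟨(f : (L ≃ₐ[K] L) → L) τ₀, hval f f.2⟩
      map_add' := fun f g => rfl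
      map_smul' := fun c f => rfl }
  have hinj : Function.Injective φ := by
    rw [← LinearMap.ker_eq_bot, LinearMap.ker_eq_bot']
    intro f hf
    have h0 : (f : (L ≃ₐ[K] L) → L) τ₀ = 0 := congrArg Subtype.val hf
    ext τ
    show (f : (L ≃ₐ[K] L) → L) τ = 0
    by_cases hτ : ConjClasses.mk τ = ConjClasses.mk τ₀
    · obtain ⟨σ, hσ⟩ := isConj_iff.1 (ConjClasses.mk_eq_mk_iff_isConj.1 hτ)
      -- σ * τ * σ⁻¹ = τ₀, so τ = σ⁻¹ * τ₀ * σ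
      have hτ' : τ = σ⁻¹ * τ₀ * σ := by rw [← hσ]; group
      have h1 := ((hAc f).1 f.2).1 σ τ₀
      rw [h0] at h1
      rw [hτ']
      exact σ.injective (by rw [h1, map_zero])
    · exact ((hAc f).1 f.2).2 τ hτ
  have hsurj : Function.Surjective φ := by
    rintro ⟨x, hx⟩
    set f : (L ≃ₐ[K] L) → L := fun τ =>
      if h : ∃ σ : L ≃ₐ[K] L, σ * τ₀ * σ⁻¹ = τ then h.choose x else 0 with hfdef
    have hfval : ∀ (σ : L ≃ₐ[K] L), f (σ * τ₀ * σ⁻¹) = σ x := by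
      intro σ
      have h : ∃ ρ : L ≃ₐ[K] L, ρ * τ₀ * ρ⁻¹ = σ * τ₀ * σ⁻¹ := ⟨σ, rfl⟩
      rw [hfdef]
      simp only [dif_pos h]
      exact key x hx _ _ h.choose_spec
    have hf0 : ∀ τ : L ≃ₐ[K] L, ConjClasses.mk τ ≠ ConjClasses.mk τ₀ → f τ = 0 := by
      intro τ hτ
      rw [hfdef]
      apply dif_neg
      rintro ⟨σ, hσ⟩
      exact hτ (ConjClasses.mk_eq_mk_iff_isConj.2 (isConj_iff.2 ⟨σ, hσ⟩).symm)
    have hmem : f ∈ Ac := by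
      rw [hAc]
      refine ⟨?_, hf0⟩
      intro σ τ
      by_cases hτ : ∃ ρ : L ≃ₐ[K] L, ρ * τ₀ * ρ⁻¹ = τ
      · obtain ⟨ρ, hρ⟩ := hτ
        have h1 : σ⁻¹ * τ * σ = (σ⁻¹ * ρ) * τ₀ * (σ⁻¹ * ρ)⁻¹ := by rw [← hρ]; group
        rw [h1, hfval, ← hρ, hfval]
        exact σ.apply_symm_apply (ρ x)
      · have h2 : ConjClasses.mk τ ≠ ConjClasses.mk τ₀ := by
          intro h
          obtain ⟨σ', hσ'⟩ := isConj_iff.1 (ConjClasses.mk_eq_mk_iff_isConj.1 h)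
          exact hτ ⟨σ'⁻¹, by rw [← hσ']; group⟩
        have h3 : ConjClasses.mk (σ⁻¹ * τ * σ) ≠ ConjClasses.mk τ₀ := by
          intro h
          apply h2
          rw [← h]
          exact ConjClasses.mk_eq_mk_iff_isConj.2 (isConj_iff.2 ⟨σ⁻¹, by group⟩)
        rw [hf0 τ h2, hf0 _ h3, map_zero]
    refine ⟨⟨f, hmem⟩, ?_⟩
    have : f τ₀ = x := by
      have := hfval 1
      simpa using this
    exact Subtype.ext this
  refine ⟨LinearEquiv.ofBijective φ ⟨hinj, hsurj⟩, fun f => rfl, fun f g => rfl⟩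
end
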